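/- arXiv:2604.03966 — 5 statements merged into one kernel-verified Lean document; each statement's English description precedes it below -/
import Mathlib

section
/- Let n ≥ 2 and let d be a proper divisor of n (i.e., d divides n and 1 < d < n). Then the set A_d = {x ∈ ℤ_n : gcd(x, n) = d}, where gcd(x, n) is the greatest common divisor of the canonical representative of x in {0, 1, …, n−1} with n, is an independent set of the comaximal graph Γ(ℤ_n) of cardinality φ(n/d). -/
open Polynomial

/-- The comaximal graph of `ℤ/nℤ`: distinct `a, b` are adjacent iff the ideal
generated by `a` and `b` is the whole ring. -/
def comaximalGraph (n : ℕ) : SimpleGraph (ZMod n) where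
  Adj a b := a ≠ b ∧ Ideal.span ({a, b} : Set (ZMod n)) = ⊤
  symm := by
    constructor
    rintro a b ⟨hab, h⟩
    refine ⟨hab.symm, ?_⟩
    rwa [Set.pair_comm]
  loopless := by
    constructor
    rintro a ⟨h, -⟩
    exact h rfl

/-- `S` is an independent dominating set of `G`. -/
def IsIndepDomSet {V : Type*} (G : SimpleGraph V) (S : Finset V) : Prop :=
  (∀ a ∈ S, ∀ b ∈ S, ¬ G.Adj a b) ∧ ∀ v : V, v ∉ S → ∃ u ∈ S, G.Adj u v

/-- The independent domination polynomial `D_i(G, x) = Σ_k d_i(G,k) x^k`. -/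
noncomputable def indepDomPoly {V : Type*} (G : SimpleGraph V) : Polynomial ℝ :=
  ∑ k ∈ Finset.range (Nat.card V + 1),
    Polynomial.C ((Nat.card {S : Finset V // IsIndepDomSet G S ∧ S.card = k}) : ℝ) *
      Polynomial.X ^ k

/-- The independence polynomial `I(G, x) = Σ_k c_k x^k`. -/
noncomputable def indepPoly {V : Type*} (G : SimpleGraph V) : Polynomial ℝ :=
  ∑ k ∈ Finset.range (Nat.card V + 1),
    Polynomial.C ((Nat.card {S : Finset V //
        (∀ a ∈ S, ∀ b ∈ S, ¬ G.Adj a b) ∧ S.card = k}) : ℝ) *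
      Polynomial.X ^ k

/-! The elements of `A_d` all lie in the kernel of the reduction `ℤ_n → ℤ_d`, a proper ideal,
so no two of them generate the unit ideal. The map `x ↦ x.val` identifies `A_d` with
`{k < n | gcd(n, k) = d}`, which has `φ(n/d)` elements. -/

theorem comaximalGraph_not_adj_of_mem {n : ℕ} {I : Ideal (ZMod n)} (hI : I ≠ ⊤) {a b : ZMod n}
    (ha : a ∈ I) (hb : b ∈ I) : ¬ (comaximalGraph n).Adj a b := fun ⟨_, hspan⟩ =>
  hI <| top_le_iff.mp <| hspan ▸
    Ideal.span_le.mpr (Set.insert_subset ha (Set.singleton_subset_iff.mpr hb))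

theorem comaximalGraph_not_adj_of_dvd_val {n d : ℕ} [NeZero n] (hdvd : d ∣ n) (hd : d ≠ 1)
    {a b : ZMod n} (ha : d ∣ a.val) (hb : d ∣ b.val) : ¬ (comaximalGraph n).Adj a b := by
  have : Nontrivial (ZMod d) := ZMod.nontrivial_iff.mpr hd
  have hker : ∀ {x : ZMod n}, d ∣ x.val → x ∈ RingHom.ker (ZMod.castHom hdvd (ZMod d)) := by
    intro x hx
    rwa [RingHom.mem_ker, ← ZMod.natCast_zmod_val x, map_natCast, ZMod.natCast_eq_zero_iff]
  exact comaximalGraph_not_adj_of_mem (RingHom.ker_ne_top _) (hker ha) (hker hb)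

theorem ZMod.natCard_setOf_val {n : ℕ} [NeZero n] (P : ℕ → Prop) [DecidablePred P] :
    Nat.card {x : ZMod n | P x.val} = ({k ∈ Finset.range n | P k} : Finset ℕ).card := by
  rw [Nat.card_eq_card_toFinset]
  refine Finset.card_nbij' ZMod.val (fun k => (k : ZMod n)) ?_ ?_ ?_ ?_ <;> intro x hx <;>
    simp_all [ZMod.val_lt, Nat.mod_eq_of_lt]

theorem stmt_1_general (n d : ℕ) (hn : 2 ≤ n) (hdvd : d ∣ n) (hd1 : 1 < d) :
    (∀ a ∈ {x : ZMod n | Nat.gcd x.val n = d}, ∀ b ∈ {x : ZMod n | Nat.gcd x.val n = d},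
      ¬ (comaximalGraph n).Adj a b) ∧
    Nat.card {x : ZMod n | Nat.gcd x.val n = d} = Nat.totient (n / d) := by
  have : NeZero n := ⟨by omega⟩
  refine ⟨fun a ha b hb => ?_, ?_⟩
  · exact comaximalGraph_not_adj_of_dvd_val hdvd hd1.ne' (ha ▸ Nat.gcd_dvd_left _ _)
      (hb ▸ Nat.gcd_dvd_left _ _)
  · simp_rw [ZMod.natCard_setOf_val (fun k => Nat.gcd k n = d), Nat.gcd_comm _ n]
    exact (Nat.totient_div_of_dvd hdvd).symm

/-- For a proper divisor `d` of `n`, the set `A_d = {x : gcd(x.val, n) = d}` is an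
independent set of the comaximal graph of cardinality `φ(n/d)`. -/
theorem stmt_1 (n d : ℕ) (hn : 2 ≤ n) (hdvd : d ∣ n) (hd1 : 1 < d) (hdn : d < n) :
    (∀ a ∈ {x : ZMod n | Nat.gcd x.val n = d}, ∀ b ∈ {x : ZMod n | Nat.gcd x.val n = d},
      ¬ (comaximalGraph n).Adj a b) ∧
    Nat.card {x : ZMod n | Nat.gcd x.val n = d} = Nat.totient (n / d) :=
  stmt_1_general n d hn hdvd hd1
end

section
/- Let n ≥ 2 be an integer having at least two distinct prime divisors, let rad(n) denote the radical of n (the product of the distinct primes dividing n), and let H be the induced subgraph of the comaximal graph Γ(ℤ_n) on the vertex set {x ∈ ℤ_n : x ≠ 0, x is not a unit of ℤ_n, and rad(n) does not divide the canonical representative of x}. Then D_i(Γ(ℤ_n), x) = φ(n)·x + x^{n/rad(n)} · D_i(H, x). -/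
/-!
Units of `ℤ_n` are adjacent to every other vertex, so an independent dominating set containing a
unit is that singleton; this gives `φ(n)·x`. The elements divisible by `rad n` are adjacent only
to units, since a prime dividing both `rad n` and a non-unit `b` kills the ideal `(a, b)` in
`ℤ_p`. An independent dominating set without units must therefore contain all `n / rad n` of
them, and removing them leaves exactly an independent dominating set of `H`, because the elements
divisible by `rad n` dominate every unit. The argument works for any graph with a set `U` of
universal vertices and a nonempty set `N` of vertices whose neighbours all lie in `U`.
-/

open Polynomial

/-- The radical of a natural number: the product of its distinct prime divisors. -/
def natRadical (n : ℕ) : ℕ := n.primeFactors.prod id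

open Finset in
lemma indepDomPoly_eq_sum {V : Type*} [Fintype V] (G : SimpleGraph V)
    [DecidablePred (IsIndepDomSet G)] :
    indepDomPoly G = ∑ S with IsIndepDomSet G S, X ^ S.card := by
  have hmaps : ∀ S ∈ ({S | IsIndepDomSet G S} : Finset (Finset V)),
      S.card ∈ range (Nat.card V + 1) := fun S _ ↦
    mem_range_succ_iff.2 (Nat.card_eq_fintype_card (α := V) ▸ S.card_le_univ)
  rw [indepDomPoly, ← sum_fiberwise_of_maps_to' hmaps]
  refine sum_congr rfl fun k _ ↦ ?_
  rw [sum_const, filter_filter, nsmul_eq_mul, Nat.card_eq_fintype_card, Fintype.card_subtype,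
    ← C_eq_natCast]

section

variable {V : Type*} [DecidableEq V] {U N : Finset V} {W : Set V} {T : Finset W}

lemma disjoint_union_map_subtype (hW : ∀ v, v ∈ W ↔ v ∉ U ∧ v ∉ N) (hUN : Disjoint U N) :
    Disjoint U (N ∪ T.map (.subtype _)) :=
  Finset.disjoint_union_right.2 ⟨hUN, Finset.disjoint_right.2 fun v hv ↦ by
    obtain ⟨w, -, rfl⟩ := Finset.mem_map.1 hv
    exact ((hW w).1 w.2).1⟩

lemma card_union_map_subtype (hW : ∀ v, v ∈ W ↔ v ∉ U ∧ v ∉ N) :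
    (N ∪ T.map (.subtype _)).card = N.card + T.card := by
  rw [Finset.card_union_of_disjoint, Finset.card_map]
  refine Finset.disjoint_right.2 fun v hv ↦ ?_
  obtain ⟨w, -, rfl⟩ := Finset.mem_map.1 hv
  exact ((hW w).1 w.2).2

end

namespace IsIndepDomSet

variable {V : Type*} {G : SimpleGraph V}

lemma singleton {u : V} (hu : ∀ v, v ≠ u → G.Adj u v) : IsIndepDomSet G {u} := by
  refine ⟨?_, fun v hv ↦ ⟨u, Finset.mem_singleton_self u, hu v (Finset.mem_singleton.not.1 hv)⟩⟩
  simp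

lemma eq_singleton_of_mem {S : Finset V} (hS : IsIndepDomSet G S) {u : V} (huS : u ∈ S)
    (hu : ∀ v, v ≠ u → G.Adj u v) : S = {u} :=
  Finset.eq_singleton_iff_unique_mem.2
    ⟨huS, fun v hvS ↦ by_contra fun hvu ↦ hS.1 u huS v hvS (hu v hvu)⟩

variable {U N S : Finset V}

lemma subset_of_disjoint (hS : IsIndepDomSet G S) (hN : ∀ a ∈ N, G.neighborSet a ⊆ U)
    (hUS : Disjoint U S) : N ⊆ S := by
  intro a ha
  by_contra haS
  obtain ⟨u, huS, hua⟩ := hS.2 a haS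
  exact Finset.disjoint_left.1 hUS (hN a ha hua.symm) huS

variable {W : Set V}

lemma subtype_of_disjoint [DecidablePred (· ∈ W)] (hS : IsIndepDomSet G S)
    (hN : ∀ a ∈ N, G.neighborSet a ⊆ U) (hW : ∀ v, v ∈ W ↔ v ∉ U ∧ v ∉ N) (hUS : Disjoint U S) :
    IsIndepDomSet (G.induce W) (S.subtype (· ∈ W)) := by
  refine ⟨fun a ha b hb ↦ hS.1 a (Finset.mem_subtype.1 ha) b (Finset.mem_subtype.1 hb), ?_⟩
  intro v hv
  obtain ⟨u, huS, huv⟩ := hS.2 v (mt Finset.mem_subtype.2 hv)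
  have huU : u ∉ U := Finset.disjoint_right.1 hUS huS
  have huN : u ∉ N := fun huN ↦ ((hW v).1 v.2).1 (hN u huN huv)
  exact ⟨⟨u, (hW u).2 ⟨huU, huN⟩⟩, Finset.mem_subtype.2 huS, huv⟩

variable [DecidableEq V] {T : Finset W}

lemma union_map_subtype (hT : IsIndepDomSet (G.induce W) T)
    (hU : ∀ u ∈ U, ∀ v, v ≠ u → G.Adj u v) (hN : ∀ a ∈ N, G.neighborSet a ⊆ U)
    (hW : ∀ v, v ∈ W ↔ v ∉ U ∧ v ∉ N) (hUN : Disjoint U N) (hN₀ : N.Nonempty) :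
    IsIndepDomSet G (N ∪ T.map (.subtype _)) := by
  have hnotU : ∀ v ∈ N ∪ T.map (.subtype _), v ∉ U := fun v hv ↦
    Finset.disjoint_right.1 (disjoint_union_map_subtype hW hUN) hv
  refine ⟨fun a ha b hb hab ↦ ?_, fun v hv ↦ ?_⟩
  · rcases Finset.mem_union.1 ha with haN | haT
    · exact hnotU b hb (hN a haN hab)
    rcases Finset.mem_union.1 hb with hbN | hbT
    · exact hnotU a ha (hN b hbN hab.symm)
    obtain ⟨a', ha', rfl⟩ := Finset.mem_map.1 haT
    obtain ⟨b', hb', rfl⟩ := Finset.mem_map.1 hbT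
    exact hT.1 a' ha' b' hb' hab
  · by_cases hvU : v ∈ U
    · obtain ⟨a, ha⟩ := hN₀
      exact ⟨a, Finset.mem_union_left _ ha,
        (hU v hvU a fun h ↦ Finset.disjoint_left.1 hUN hvU (h ▸ ha)).symm⟩
    have hvN : v ∉ N := fun h ↦ hv (Finset.mem_union_left _ h)
    have hvT : (⟨v, (hW v).2 ⟨hvU, hvN⟩⟩ : W) ∉ T := fun h ↦
      hv (Finset.mem_union_right _ (Finset.mem_map_of_mem _ h))
    obtain ⟨u, huT, huv⟩ := hT.2 _ hvT
    exact ⟨u, Finset.mem_union_right _ (Finset.mem_map_of_mem _ huT), huv⟩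

end IsIndepDomSet

open Finset in
theorem indepDomPoly_eq_of_universal {V : Type*} [Fintype V] (G : SimpleGraph V)
    {U N : Finset V} {W : Set V} (hU : ∀ u ∈ U, ∀ v, v ≠ u → G.Adj u v)
    (hN : ∀ a ∈ N, G.neighborSet a ⊆ U) (hW : ∀ v, v ∈ W ↔ v ∉ U ∧ v ∉ N)
    (hUN : Disjoint U N) (hN₀ : N.Nonempty) :
    indepDomPoly G = C (U.card : ℝ) * X + X ^ N.card * indepDomPoly (G.induce W) := by
  classical
  rw [indepDomPoly_eq_sum, indepDomPoly_eq_sum, ← sum_filter_not_add_sum_filter _ (Disjoint U),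
    filter_filter, filter_filter]
  congr 1
  · have hsingle : ({S | IsIndepDomSet G S ∧ ¬Disjoint U S} : Finset (Finset V)) =
        U.map ⟨singleton, singleton_injective⟩ := by
      ext S
      simp only [mem_filter, mem_univ, true_and, mem_map, Function.Embedding.coeFn_mk,
        not_disjoint_iff]
      constructor
      · rintro ⟨hS, u, hu, huS⟩
        exact ⟨u, hu, (hS.eq_singleton_of_mem huS (hU u hu)).symm⟩
      · rintro ⟨u, hu, rfl⟩
        exact ⟨IsIndepDomSet.singleton (hU u hu), u, hu, mem_singleton_self u⟩
    simp [hsingle]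
  · rw [mul_sum]
    symm
    refine sum_nbij' (fun T ↦ N ∪ T.map (.subtype _)) (fun S ↦ S.subtype (· ∈ W)) ?_ ?_ ?_ ?_ ?_
    · intro T hT
      simp only [mem_filter, mem_univ, true_and] at hT ⊢
      exact ⟨hT.union_map_subtype hU hN hW hUN hN₀, disjoint_union_map_subtype hW hUN⟩
    · intro S hS
      simp only [mem_filter, mem_univ, true_and] at hS ⊢
      exact hS.1.subtype_of_disjoint hN hW hS.2
    · intro T _
      ext w
      simp [((hW w).1 w.2).2]
    · intro S hS
      simp only [mem_filter, mem_univ, true_and] at hS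
      have hNS := hS.1.subset_of_disjoint hN hS.2
      rw [subtype_map]
      ext v
      simp only [mem_union, mem_filter]
      refine ⟨fun h ↦ h.elim (hNS ·) And.left, fun hv ↦ ?_⟩
      by_cases hvN : v ∈ N
      · exact .inl hvN
      · exact .inr ⟨hv, (hW v).2 ⟨disjoint_right.1 hS.2 hv, hvN⟩⟩
    · intro T _
      rw [card_union_map_subtype hW, pow_add]

open Finset in
lemma card_filter_isUnit (M : Type*) [Monoid M] [Fintype M] [Fintype Mˣ]
    [DecidablePred (IsUnit : M → Prop)] :
    #{x : M | IsUnit x} = Fintype.card Mˣ := by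
  rw [← card_univ, ← card_map ⟨Units.val, Units.val_injective⟩]
  congr 1
  ext x
  simp only [mem_filter, mem_univ, true_and, mem_map, Function.Embedding.coeFn_mk]
  exact Iff.rfl

lemma prime_dvd_natRadical {p n : ℕ} (hp : p.Prime) (hpn : p ∣ n) (hn : n ≠ 0) :
    p ∣ natRadical n :=
  Finset.dvd_prod_of_mem id (Nat.mem_primeFactors.2 ⟨hp, hpn, hn⟩)

lemma natRadical_dvd (n : ℕ) : natRadical n ∣ n :=
  Nat.prod_primeFactors_dvd n

namespace ZMod

variable {n : ℕ}

lemma comaximalGraph_adj_of_isUnit {a b : ZMod n} (ha : IsUnit a) (hab : b ≠ a) :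
    (comaximalGraph n).Adj a b :=
  ⟨hab.symm, Ideal.eq_top_of_isUnit_mem _ (Ideal.subset_span (Set.mem_insert a {b})) ha⟩

variable [NeZero n]

open Finset in
lemma card_filter_dvd_val {d : ℕ} (hd : d ∣ n) : #{x : ZMod n | d ∣ x.val} = n / d := by
  obtain ⟨m, rfl⟩ := hd
  have hd : 0 < d := Nat.pos_of_ne_zero (left_ne_zero_of_mul (NeZero.ne (d * m)))
  have hlt : ∀ k < m, d * k < d * m := fun k hk ↦ Nat.mul_lt_mul_of_pos_left hk hd
  rw [Nat.mul_div_cancel_left m hd]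
  refine Eq.trans (card_nbij' (t := range m) (·.val / d) (fun k ↦ ((d * k : ℕ) : ZMod (d * m)))
    ?_ ?_ ?_ ?_) (card_range m)
  · intro x _
    exact mem_range.2 (Nat.div_lt_of_lt_mul x.val_lt)
  · intro k hk
    refine mem_filter.2 ⟨mem_univ _, ?_⟩
    rw [val_cast_of_lt (hlt k (mem_range.1 hk))]
    exact dvd_mul_right d k
  · intro x hx
    dsimp only
    rw [Nat.mul_div_cancel' (mem_filter.1 hx).2, natCast_zmod_val]
  · intro k hk
    dsimp only
    rw [val_cast_of_lt (hlt k (mem_range.1 hk)), Nat.mul_div_cancel_left _ hd]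

lemma exists_prime_dvd_of_not_isUnit {x : ZMod n} (hx : ¬IsUnit x) :
    ∃ p, p.Prime ∧ p ∣ x.val ∧ p ∣ n :=
  Nat.Prime.not_coprime_iff_dvd.1 fun h ↦ hx (by simpa using (isUnit_iff_coprime x.val n).2 h)

lemma span_pair_ne_top_of_prime_dvd {p : ℕ} (hp : p.Prime) (hpn : p ∣ n) {a b : ZMod n}
    (ha : p ∣ a.val) (hb : p ∣ b.val) : Ideal.span {a, b} ≠ ⊤ := by
  have : Fact p.Prime := ⟨hp⟩
  let f := castHom hpn (ZMod p)
  have hker : ∀ x : ZMod n, p ∣ x.val → x ∈ RingHom.ker f := fun x hx ↦ by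
    rw [RingHom.mem_ker, ← natCast_zmod_val x, map_natCast, natCast_eq_zero_iff]
    exact hx
  refine ne_top_of_le_ne_top (RingHom.ker_ne_top f) (Ideal.span_le.2 ?_)
  exact Set.insert_subset_iff.2 ⟨hker a ha, Set.singleton_subset_iff.2 (hker b hb)⟩

lemma not_isUnit_of_natRadical_dvd (hn : n ≠ 1) {x : ZMod n} (hx : natRadical n ∣ x.val) :
    ¬IsUnit x := by
  obtain ⟨p, hp, hpn⟩ := Nat.exists_prime_and_dvd hn
  refine fun hu ↦
    Nat.Prime.not_coprime_iff_dvd.2 ⟨p, hp, ?_, hpn⟩ ((isUnit_iff_coprime x.val n).1 ?_)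
  · exact (prime_dvd_natRadical hp hpn (NeZero.ne n)).trans hx
  · rwa [natCast_zmod_val]

lemma isUnit_of_comaximalGraph_adj {a b : ZMod n} (ha : natRadical n ∣ a.val)
    (hab : (comaximalGraph n).Adj a b) : IsUnit b := by
  by_contra hb
  obtain ⟨p, hp, hpb, hpn⟩ := exists_prime_dvd_of_not_isUnit hb
  exact span_pair_ne_top_of_prime_dvd hp hpn
    ((prime_dvd_natRadical hp hpn (NeZero.ne n)).trans ha) hpb hab.2

end ZMod

open Finset ZMod in
theorem stmt_2_general (n : ℕ) (hn : 2 ≤ n) :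
    indepDomPoly (comaximalGraph n) =
      Polynomial.C ((Nat.totient n : ℝ)) * Polynomial.X +
        Polynomial.X ^ (n / natRadical n) *
          indepDomPoly ((comaximalGraph n).induce
            {x : ZMod n | x ≠ 0 ∧ ¬ IsUnit x ∧ ¬ (natRadical n ∣ x.val)}) := by
  have : NeZero n := ⟨by omega⟩
  classical
  have hUN : Disjoint ({x | IsUnit x} : Finset (ZMod n))
      ({x | natRadical n ∣ x.val} : Finset (ZMod n)) :=
    disjoint_filter.2 fun x _ hu hx ↦ not_isUnit_of_natRadical_dvd (by omega) hx hu
  rw [indepDomPoly_eq_of_universal (comaximalGraph n) ?_ ?_ ?_ hUN ⟨0, by simp⟩,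
    card_filter_isUnit, card_units_eq_totient, card_filter_dvd_val (natRadical_dvd n)]
  · exact fun u hu v hv ↦ comaximalGraph_adj_of_isUnit (mem_filter.1 hu).2 hv
  · exact fun a ha b hab ↦
      mem_filter.2 ⟨mem_univ b, isUnit_of_comaximalGraph_adj (mem_filter.1 ha).2 hab⟩
  · intro v
    simp only [Set.mem_ofPred_eq, mem_filter, mem_univ, true_and]
    refine ⟨fun h ↦ h.2, fun h ↦ ⟨?_, h⟩⟩
    rintro rfl
    exact h.2 (by simp)

/-- For `n` with at least two distinct prime divisors,
`D_i(Γ(ℤ_n), x) = φ(n)·x + x^(n/rad n) · D_i(H, x)`, where `H` is the induced subgraph on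
nonzero non-units whose canonical representative is not divisible by `rad n`. -/
theorem stmt_2 (n : ℕ) (hn : 2 ≤ n)
    (h : ∃ p q : ℕ, p.Prime ∧ q.Prime ∧ p ≠ q ∧ p ∣ n ∧ q ∣ n) :
    indepDomPoly (comaximalGraph n) =
      Polynomial.C ((Nat.totient n : ℝ)) * Polynomial.X +
        Polynomial.X ^ (n / natRadical n) *
          indepDomPoly ((comaximalGraph n).induce
            {x : ZMod n | x ≠ 0 ∧ ¬ IsUnit x ∧ ¬ (natRadical n ∣ x.val)}) :=
  stmt_2_general n hn
end

section
/- Let p < q be primes, let n₁, n₂ ≥ 1 be integers, and set n = p^{n₁} q^{n₂}. Then the independent domination polynomial D_i(Γ(ℤ_n), x) = φ(n)·x + x^{p^{n₁} q^{n₂−1}} + x^{p^{n₁−1} q^{n₂}} fails to be log-concave if and only if one of the following holds: (a) n₁ = n₂ = 1 and p = 3; (b) n₁ = n₂ = 1 and q = p + 2; (c) n₁ = 2, n₂ = 1, p = 2 and q = 3; (d) n₁ = n₂ = 1, p = 2 and q = 3. -/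
open Polynomial

/-- A real polynomial is log-concave if `a_i² ≥ a_{i−1}·a_{i+1}` for all `1 ≤ i ≤ d−1`,
where `a_0, …, a_d` is its coefficient sequence (`d` the degree). -/
def LogConcave (f : Polynomial ℝ) : Prop :=
  ∀ i, 1 ≤ i → i + 1 ≤ f.natDegree → f.coeff (i - 1) * f.coeff (i + 1) ≤ (f.coeff i) ^ 2

/-!
The polynomial has just three nonzero coefficients: `φ(n) ≥ 2` at `1`, and `1` at
`a = p^{n₁} q^{n₂-1}` and at `b = p^{n₁-1} q^{n₂} > a`. Log-concavity can only fail at an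
index `i` whose neighbours `i ± 1` both carry nonzero coefficients; this happens exactly when
`a = 3`, `b = 3` (the run `φ(n), 1, 1`) or `b = a + 2`.
Writing `a = t p`, `b = t q` with `t = p^{n₁-1} q^{n₂-1}`, these read `t p = 3`, `t q = 3` and
`t (q - p) = 2`, which unique factorization solves.
-/

section Trinomial

variable {r : ℝ} {a b : ℕ}

theorem coeff_trinomial (k : ℕ) :
    (C r * X + X ^ a + X ^ b).coeff k =
      (if k = 1 then r else 0) + (if k = a then 1 else 0) + (if k = b then 1 else 0) := by
  simp [coeff_C_mul, coeff_X, coeff_X_pow, eq_comm]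

theorem natDegree_trinomial (hb : 1 < b) (hab : a < b) :
    (C r * X + X ^ a + X ^ b).natDegree = b := by
  have hlow : (C r * X + X ^ a).natDegree < b := by
    refine (natDegree_add_le _ _).trans_lt (max_lt ?_ ?_)
    · exact (natDegree_C_mul_le _ _).trans_lt (by simpa using hb)
    · simpa using hab
  rw [natDegree_add_eq_right_of_natDegree_lt (by simpa using hlow), natDegree_X_pow]

theorem logConcave_trinomial (hab : a < b) (ha : a ≠ 3) (hb : b ≠ 3)
    (hgap : b ≠ a + 2) : LogConcave (C r * X + X ^ a + X ^ b) := by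
  intro i hi _
  have coeff_eq_zero {k : ℕ} (h1 : k ≠ 1) (ha : k ≠ a) (hb : k ≠ b) :
      (C r * X + X ^ a + X ^ b).coeff k = 0 := by
    rw [coeff_trinomial]
    simp [h1, ha, hb]
  by_cases hlow : i - 1 = 1 ∨ i - 1 = a ∨ i - 1 = b
  · rw [coeff_eq_zero (k := i + 1) (by omega) (by omega) (by omega), mul_zero]
    positivity
  · simp only [not_or] at hlow
    rw [coeff_eq_zero hlow.1 hlow.2.1 hlow.2.2, zero_mul]
    positivity

theorem not_logConcave_trinomial (hr : 1 < r) (ha : 2 ≤ a) (hab : a < b)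
    (h : a = 3 ∨ b = 3 ∨ b = a + 2) : ¬ LogConcave (C r * X + X ^ a + X ^ b) := by
  intro hlc
  have hdeg := natDegree_trinomial (r := r) (by omega) hab
  rcases h with rfl | rfl | rfl
  · have : r ≤ 0 := by
      simpa [coeff_trinomial, show 1 ≠ b by omega, show 2 ≠ b by omega, show 3 ≠ b by omega]
        using hlc 2 one_le_two (by omega)
    linarith
  · obtain rfl : a = 2 := by omega
    have : r ≤ 1 := by simpa [coeff_trinomial] using hlc 2 one_le_two (by omega)
    linarith
  · have : (1 : ℝ) ≤ 0 := by
      simpa [coeff_X, coeff_C, coeff_X_pow, show 1 ≠ a by omega, show a + 1 + 1 ≠ a by omega,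
        show a ≠ 0 by omega] using hlc (a + 1) (by omega) (by omega)
    linarith

theorem not_logConcave_trinomial_iff (hr : 1 < r) (ha : 2 ≤ a) (hab : a < b) :
    ¬ LogConcave (C r * X + X ^ a + X ^ b) ↔ a = 3 ∨ b = 3 ∨ b = a + 2 := by
  refine ⟨fun h ↦ ?_, not_logConcave_trinomial hr ha hab⟩
  by_contra! hne
  exact h (logConcave_trinomial hab hne.1 hne.2.1 hne.2.2)

end Trinomial

theorem pow_mul_pow_eq_pow_mul_pow_iff {p q : ℕ} (hp : p.Prime) (hq : q.Prime) (hpq : p ≠ q)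
    {m k m' k' : ℕ} : p ^ m * q ^ k = p ^ m' * q ^ k' ↔ m = m' ∧ k = k' := by
  refine ⟨fun h ↦ ?_, by rintro ⟨rfl, rfl⟩; rfl⟩
  have hfac := congrArg Nat.factorization h
  simp only [Nat.factorization_mul (pow_ne_zero _ hp.ne_zero) (pow_ne_zero _ hq.ne_zero),
    hp.factorization_pow, hq.factorization_pow] at hfac
  have hmp := congrArg (· p) hfac
  have hkq := congrArg (· q) hfac
  simp [hpq, hpq.symm] at hmp hkq
  exact ⟨hmp, hkq⟩

theorem one_lt_totient {n : ℕ} (hn : 2 < n) : 1 < n.totient := by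
  have hpos : 0 < n.totient := Nat.totient_pos.mpr (by omega)
  have hne : n.totient ≠ 1 := by rw [Ne, Nat.totient_eq_one_iff]; omega
  omega

theorem mul_eq_prime_iff {t p ℓ : ℕ} (hp : p.Prime) (hℓ : ℓ.Prime) :
    t * p = ℓ ↔ t = 1 ∧ p = ℓ := by
  refine ⟨fun h ↦ ?_, fun ⟨ht, hpℓ⟩ ↦ by rw [ht, hpℓ, one_mul]⟩
  have ht : t = 1 := by
    rcases Nat.prime_mul_iff.mp (h ▸ hℓ) with ⟨-, hp1⟩ | ⟨-, ht⟩
    · exact absurd hp1 hp.ne_one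
    · exact ht
  subst ht
  exact ⟨rfl, by rwa [one_mul] at h⟩

/-- `t (q - p) = 2`, so either `t = 1`, or `t = 2` and the primes `p, q` are consecutive. -/
theorem mul_eq_mul_add_two_iff {t p q : ℕ} (hp : p.Prime) (hq : q.Prime) (hpq : p < q) :
    t * q = t * p + 2 ↔ t = 1 ∧ q = p + 2 ∨ t = 2 ∧ p = 2 ∧ q = 3 := by
  constructor
  · intro h
    have hdiff : t * (q - p) = 2 := by rw [Nat.mul_sub, h, Nat.add_sub_cancel_left]
    rcases (Nat.dvd_prime Nat.prime_two).mp (Dvd.intro _ hdiff) with rfl | rfl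
    · left; omega
    · right
      have hqp : q - 1 = p := by omega
      have hp2 : p = 2 := hp.even_iff.mp (hqp ▸ hq.even_sub_one (by have := hp.two_le; omega))
      omega
  · rintro (⟨rfl, rfl⟩ | ⟨rfl, rfl, rfl⟩) <;> ring

/-- For primes `p < q` and `n₁, n₂ ≥ 1`, with `n = p^{n₁} q^{n₂}`, the polynomial
`D_i(Γ(ℤ_n), x) = φ(n)·x + x^(p^{n₁} q^{n₂−1}) + x^(p^{n₁−1} q^{n₂})` fails to be
log-concave iff (a) `n₁ = n₂ = 1, p = 3`, or (b) `n₁ = n₂ = 1, q = p + 2`, or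
(c) `n₁ = 2, n₂ = 1, p = 2, q = 3`, or (d) `n₁ = n₂ = 1, p = 2, q = 3`. -/
theorem stmt_13 (p q n₁ n₂ : ℕ) (hp : p.Prime) (hq : q.Prime) (hpq : p < q)
    (h1 : 1 ≤ n₁) (h2 : 1 ≤ n₂) :
    ¬ LogConcave (Polynomial.C ((Nat.totient (p ^ n₁ * q ^ n₂) : ℝ)) * Polynomial.X +
        Polynomial.X ^ (p ^ n₁ * q ^ (n₂ - 1)) +
        Polynomial.X ^ (p ^ (n₁ - 1) * q ^ n₂)) ↔
      ((n₁ = 1 ∧ n₂ = 1 ∧ p = 3) ∨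
       (n₁ = 1 ∧ n₂ = 1 ∧ q = p + 2) ∨
       (n₁ = 2 ∧ n₂ = 1 ∧ p = 2 ∧ q = 3) ∨
       (n₁ = 1 ∧ n₂ = 1 ∧ p = 2 ∧ q = 3)) := by
  obtain ⟨m, rfl⟩ : ∃ m, n₁ = m + 1 := ⟨n₁ - 1, by omega⟩
  obtain ⟨k, rfl⟩ : ∃ k, n₂ = k + 1 := ⟨n₂ - 1, by omega⟩
  have hp2 := hp.two_le
  have ht1 : p ^ m * q ^ k = 1 ↔ m = 0 ∧ k = 0 := by
    simpa using pow_mul_pow_eq_pow_mul_pow_iff hp hq hpq.ne (m' := 0) (k' := 0)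
  have ht2 : p = 2 → q = 3 → (p ^ m * q ^ k = 2 ↔ m = 1 ∧ k = 0) := by
    rintro rfl rfl
    simpa using pow_mul_pow_eq_pow_mul_pow_iff hp hq (by norm_num) (m' := 1) (k' := 0)
  have ht : 0 < p ^ m * q ^ k := Nat.mul_pos (pow_pos hp.pos m) (pow_pos hq.pos k)
  have hn : 2 < p ^ (m + 1) * q ^ (k + 1) :=
    calc 2 < q := by omega
      _ ≤ q ^ (k + 1) := Nat.le_self_pow k.succ_ne_zero q
      _ ≤ p ^ (m + 1) * q ^ (k + 1) := Nat.le_mul_of_pos_left _ (pow_pos hp.pos _)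
  have hφ : (1 : ℝ) < Nat.totient (p ^ (m + 1) * q ^ (k + 1)) := by
    exact_mod_cast one_lt_totient hn
  have ha : p ^ (m + 1) * q ^ k = p ^ m * q ^ k * p := by ring
  have hb : p ^ m * q ^ (k + 1) = p ^ m * q ^ k * q := by ring
  rw [Nat.add_sub_cancel, Nat.add_sub_cancel, ha, hb,
    not_logConcave_trinomial_iff hφ (hp2.trans (Nat.le_mul_of_pos_left p ht))
      (Nat.mul_lt_mul_of_pos_left hpq ht),
    mul_eq_prime_iff hp Nat.prime_three, mul_eq_prime_iff hq Nat.prime_three,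
    mul_eq_mul_add_two_iff hp hq hpq]
  grind
end

section
/- Let p < q be primes and n = pq. Then the independence polynomial of the comaximal graph Γ(ℤ_n) is I(Γ(ℤ_n), x) = (φ(n) − 1)·x + (1 + x)^p + (1 + x)^q − 1. -/
open Polynomial

/-! By the Chinese remainder theorem `ℤ_{pq} ≅ 𝔽_p × 𝔽_q`, and `a, b` generate the unit ideal iff
in each coordinate one of them is nonzero. So the non-edges of `Γ(ℤ_{pq})` are exactly the pairs inside
`A = {x | x ≡ 0 mod p}` (`q` elements) or inside `B = {x | x ≡ 0 mod q}` (`p` elements), and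
`A ∩ B = {0}`. An independent set is then a subset of `A`, a subset of `B`, or a single unit, and
inclusion–exclusion gives `(1 + x)^q + (1 + x)^p - (1 + x) + φ(pq) x`. -/

open Finset

theorem Ideal.span_pair_eq_top_iff_isCoprime {R : Type*} [CommRing R] (a b : R) :
    Ideal.span ({a, b} : Set R) = ⊤ ↔ IsCoprime a b := by
  rw [Ideal.span_insert, ← Ideal.isCoprime_iff_sup_eq, Ideal.isCoprime_span_singleton_iff]

theorem isCoprime_iff_ne_zero_or_ne_zero {K : Type*} [Field K] (a b : K) :
    IsCoprime a b ↔ a ≠ 0 ∨ b ≠ 0 := by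
  refine ⟨IsCoprime.ne_zero_or_ne_zero, ?_⟩
  rintro (ha | hb)
  · exact ⟨a⁻¹, 0, by simp [ha]⟩
  · exact ⟨0, b⁻¹, by simp [hb]⟩

theorem Prod.isCoprime_iff {R S : Type*} [CommSemiring R] [CommSemiring S] (a b : R × S) :
    IsCoprime a b ↔ IsCoprime a.1 b.1 ∧ IsCoprime a.2 b.2 := by
  refine ⟨fun h => ⟨h.map (RingHom.fst R S), h.map (RingHom.snd R S)⟩, ?_⟩
  rintro ⟨⟨u₁, v₁, h₁⟩, ⟨u₂, v₂, h₂⟩⟩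
  exact ⟨(u₁, u₂), (v₁, v₂), Prod.ext h₁ h₂⟩

theorem RingEquiv.isCoprime_apply_iff {R S : Type*} [CommSemiring R] [CommSemiring S]
    (e : R ≃+* S) (a b : R) : IsCoprime (e a) (e b) ↔ IsCoprime a b :=
  ⟨fun h => by simpa using h.map e.symm.toRingHom, fun h => h.map e.toRingHom⟩

theorem Ideal.span_pair_eq_top_iff_of_ringEquiv_prod {R K L : Type*} [CommRing R] [Field K]
    [Field L] (e : R ≃+* K × L) (a b : R) :
    Ideal.span ({a, b} : Set R) = ⊤ ↔
      ((e a).1 ≠ 0 ∨ (e b).1 ≠ 0) ∧ ((e a).2 ≠ 0 ∨ (e b).2 ≠ 0) := by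
  rw [Ideal.span_pair_eq_top_iff_isCoprime, ← e.isCoprime_apply_iff, Prod.isCoprime_iff,
    isCoprime_iff_ne_zero_or_ne_zero, isCoprime_iff_ne_zero_or_ne_zero]

theorem Finset.sum_powerset_pow_card {ι R : Type*} [CommSemiring R] (a : R) (s : Finset ι) :
    ∑ t ∈ s.powerset, a ^ #t = (a + 1) ^ #s := by
  simpa using sum_pow_mul_eq_add_pow a 1 s

theorem indepPoly_eq_sum {V : Type*} [Fintype V] (G : SimpleGraph V) (I : Finset (Finset V))
    (hI : ∀ S, S ∈ I ↔ ∀ a ∈ S, ∀ b ∈ S, ¬ G.Adj a b) :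
    indepPoly G = ∑ S ∈ I, (X : ℝ[X]) ^ #S := by
  classical
  have hcard : ∀ S ∈ I, #S ∈ range (Nat.card V + 1) := fun S _ => by
    simpa [Nat.lt_succ_iff] using card_le_univ S
  rw [indepPoly, ← sum_fiberwise_of_maps_to hcard]
  refine sum_congr rfl fun k _ => ?_
  rw [sum_congr rfl fun S hS => by rw [(mem_filter.1 hS).2], sum_const, nsmul_eq_mul,
    ← C_eq_natCast, Nat.card_eq_fintype_card, Fintype.card_subtype]
  congr 4
  ext S
  simp [hI]

section CoCliques

variable {V : Type*} [DecidableEq V] {G : SimpleGraph V} {A B : Finset V}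

theorem indep_iff_of_adj_iff
    (hG : ∀ a b, G.Adj a b ↔ a ≠ b ∧ (a ∉ A ∨ b ∉ A) ∧ (a ∉ B ∨ b ∉ B)) (S : Finset V) :
    (∀ a ∈ S, ∀ b ∈ S, ¬ G.Adj a b) ↔ S ⊆ A ∨ S ⊆ B ∨ ∃ u ∉ A ∪ B, S = {u} := by
  constructor
  · intro hS
    by_cases hu : ∃ u ∈ S, u ∉ A ∪ B
    · obtain ⟨u, huS, huAB⟩ := hu
      rw [mem_union, not_or] at huAB
      refine Or.inr (Or.inr ⟨u, by simpa using huAB, ?_⟩)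
      refine eq_singleton_iff_unique_mem.2 ⟨huS, fun x hxS => ?_⟩
      by_contra hxu
      exact hS u huS x hxS ((hG u x).2 ⟨Ne.symm hxu, Or.inl huAB.1, Or.inl huAB.2⟩)
    · push Not at hu
      by_contra! h
      obtain ⟨a, haS, haA⟩ := not_subset.1 h.1
      obtain ⟨b, hbS, hbB⟩ := not_subset.1 h.2.1
      have hbA : b ∈ A := by simpa [hbB] using hu b hbS
      have hab : a ≠ b := (ne_of_mem_of_not_mem hbA haA).symm
      exact hS a haS b hbS ((hG a b).2 ⟨hab, Or.inl haA, Or.inr hbB⟩)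
  · rintro (hA | hB | ⟨u, -, rfl⟩) a ha b hb
    · simp [hG, hA ha, hA hb]
    · simp [hG, hB ha, hB hb]
    · simp_all

theorem indepPoly_eq_of_adj_iff [Fintype V]
    (hG : ∀ a b, G.Adj a b ↔ a ≠ b ∧ (a ∉ A ∨ b ∉ A) ∧ (a ∉ B ∨ b ∉ B)) :
    indepPoly G = (X + 1) ^ #A + (X + 1) ^ #B - (X + 1) ^ #(A ∩ B) + (#(A ∪ B)ᶜ : ℝ[X]) * X := by
  have hI : ∀ S, S ∈ (A.powerset ∪ B.powerset) ∪ (A ∪ B)ᶜ.image ({·}) ↔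
      ∀ a ∈ S, ∀ b ∈ S, ¬ G.Adj a b := fun S => by
    rw [indep_iff_of_adj_iff hG]
    simp [eq_comm]
  have hdisj : Disjoint (A.powerset ∪ B.powerset) ((A ∪ B)ᶜ.image ({·})) := by
    simp only [disjoint_left, mem_union, mem_powerset, mem_image, mem_compl, not_or]
    rintro S hS ⟨x, ⟨hxA, hxB⟩, rfl⟩
    simp_all
  have hinter : A.powerset ∩ B.powerset = (A ∩ B).powerset := by
    ext S; simp only [mem_inter, mem_powerset, subset_inter_iff]
  have hunion := eq_sub_of_add_eq
    (sum_union_inter (s₁ := A.powerset) (s₂ := B.powerset) (f := fun S => (X : ℝ[X]) ^ #S))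
  rw [indepPoly_eq_sum G _ hI, sum_union hdisj, hunion, hinter,
    sum_image fun _ _ _ _ => singleton_injective.eq_iff.1]
  simp only [sum_powerset_pow_card, card_singleton, pow_one, sum_const, nsmul_eq_mul]

end CoCliques

theorem Finset.card_filter_fst_eq {R K L : Type*} [Fintype R] [Fintype L] [DecidableEq K]
    (e : R ≃ K × L) (k : K) : #{x | (e x).1 = k} = Fintype.card L := by
  rw [← card_univ]
  refine card_nbij' (fun x => (e x).2) (fun c => e.symm (k, c)) (fun _ _ => mem_univ _)
    (fun c _ => by simp) (fun x hx => ?_) (fun c _ => by simp)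
  simp only [coe_filter, mem_univ, true_and] at hx
  exact e.symm_apply_eq.2 (Prod.ext hx.symm rfl)

theorem Finset.card_filter_snd_eq {R K L : Type*} [Fintype R] [Fintype K] [DecidableEq L]
    (e : R ≃ K × L) (l : L) : #{x | (e x).2 = l} = Fintype.card K :=
  card_filter_fst_eq (e.trans (Equiv.prodComm K L)) l

theorem comaximalGraph_adj_iff {p q : ℕ} [Fact p.Prime] [Fact q.Prime] (h : p.Coprime q)
    (a b : ZMod (p * q)) :
    (comaximalGraph (p * q)).Adj a b ↔ a ≠ b ∧
      ((ZMod.chineseRemainder h a).1 ≠ 0 ∨ (ZMod.chineseRemainder h b).1 ≠ 0) ∧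
      ((ZMod.chineseRemainder h a).2 ≠ 0 ∨ (ZMod.chineseRemainder h b).2 ≠ 0) :=
  and_congr_right fun _ => Ideal.span_pair_eq_top_iff_of_ringEquiv_prod _ a b

/-- For `n = pq` with primes `p < q`,
`I(Γ(ℤ_n), x) = (φ(n) − 1)·x + (1 + x)^p + (1 + x)^q − 1`. -/
theorem stmt_15 (p q : ℕ) (hp : p.Prime) (hq : q.Prime) (hpq : p < q) :
    indepPoly (comaximalGraph (p * q)) =
      Polynomial.C ((Nat.totient (p * q) - 1 : ℕ) : ℝ) * Polynomial.X +
        (1 + Polynomial.X) ^ p + (1 + Polynomial.X) ^ q - 1 := by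
  have := Fact.mk hp
  have := Fact.mk hq
  have hcop : p.Coprime q := (Nat.coprime_primes hp hq).2 hpq.ne
  set e := ZMod.chineseRemainder hcop
  set A : Finset (ZMod (p * q)) := {x | (e x).1 = 0}
  set B : Finset (ZMod (p * q)) := {x | (e x).2 = 0}
  have hA : #A = q := by simpa using card_filter_fst_eq e.toEquiv 0
  have hB : #B = p := by simpa using card_filter_snd_eq e.toEquiv 0
  have hAB : A ∩ B = {0} := by
    ext x
    simp only [A, B, mem_inter, mem_filter, mem_univ, true_and, mem_singleton, ← Prod.mk_eq_zero,
      map_eq_zero_iff e e.injective]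
  have hcompl : #(A ∪ B)ᶜ = Nat.totient (p * q) := by
    rw [card_compl, ZMod.card, card_union, hA, hB, hAB, card_singleton, Nat.totient_mul hcop,
      Nat.totient_prime hp, Nat.totient_prime hq, Nat.mul_sub_one, Nat.sub_one_mul]
    have := hp.pos
    omega
  have hG : ∀ a b, (comaximalGraph (p * q)).Adj a b ↔
      a ≠ b ∧ (a ∉ A ∨ b ∉ A) ∧ (a ∉ B ∨ b ∉ B) := by
    simpa [A, B] using comaximalGraph_adj_iff hcop
  have hφ : 1 ≤ Nat.totient (p * q) := Nat.totient_pos.2 (Nat.mul_pos hp.pos hq.pos)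
  rw [indepPoly_eq_of_adj_iff hG, hA, hB, hAB, card_singleton, hcompl, Nat.cast_sub hφ]
  simp only [map_sub, map_natCast]
  ring
end

section
/- Let p be a prime and m ≥ 1 an integer, and set n = p^m. Then the independence polynomial of the comaximal graph Γ(ℤ_n) is I(Γ(ℤ_n), x) = φ(n)·x + (1 + x)^{p^{m−1}}. -/
/-!
`ℤ/p^mℤ` is a local ring, so two elements generate the unit ideal iff one of them is a unit.
Thus the `φ(p^m)` units are adjacent to every other vertex while the `p^(m-1)` nonunits are
pairwise nonadjacent: the independent sets are the unit singletons together with the subsets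
of the nonunits, which contribute `φ(p^m)·x` and `(1 + x)^(p^(m-1))` respectively.
-/

open Polynomial

theorem IsLocalRing.span_pair_eq_top_iff {R : Type*} [CommSemiring R] [IsLocalRing R] {a b : R} :
    Ideal.span {a, b} = ⊤ ↔ IsUnit a ∨ IsUnit b := by
  refine ⟨fun h => ?_, ?_⟩
  · by_contra! hab
    have hle : Ideal.span {a, b} ≤ maximalIdeal R := by
      rw [Ideal.span_le, Set.insert_subset_iff, Set.singleton_subset_iff]
      exact ⟨hab.1, hab.2⟩
    exact (maximalIdeal.isMaximal R).ne_top (top_le_iff.1 (h ▸ hle))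
  · rintro (ha | hb)
    · exact Ideal.eq_top_of_isUnit_mem _ (Ideal.subset_span (by simp)) ha
    · exact Ideal.eq_top_of_isUnit_mem _ (Ideal.subset_span (by simp)) hb

theorem ZMod.isLocalRing_prime_pow {p m : ℕ} (hp : p.Prime) (hm : 0 < m) :
    IsLocalRing (ZMod (p ^ m)) := by
  have : NeZero (p ^ m) := ⟨pow_ne_zero m hp.ne_zero⟩
  have : Nontrivial (ZMod (p ^ m)) :=
    ZMod.nontrivial_iff.2 (Nat.one_lt_pow hm.ne' hp.one_lt).ne'
  refine .of_nonunits_add fun a b ha hb => ?_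
  obtain ⟨a, rfl⟩ := ZMod.natCast_zmod_surjective a
  obtain ⟨b, rfl⟩ := ZMod.natCast_zmod_surjective b
  simp only [mem_nonunits_iff, ← Nat.cast_add, ZMod.isUnit_natCast_iff_not_dvd_pow hp hm,
    not_not] at *
  exact dvd_add ha hb

theorem Nat.card_isUnit (M : Type*) [Monoid M] : Nat.card {a : M // IsUnit a} = Nat.card Mˣ :=
  Nat.card_range_of_injective Units.val_injective

theorem Nat.prime_pow_sub_totient {p m : ℕ} (hp : p.Prime) (hm : 0 < m) :
    p ^ m - Nat.totient (p ^ m) = p ^ (m - 1) := by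
  obtain ⟨k, rfl⟩ := Nat.exists_eq_add_of_lt hm
  rw [Nat.totient_prime_pow_succ hp, zero_add, Nat.add_sub_cancel, pow_succ, ← Nat.mul_sub,
    Nat.sub_sub_self hp.one_le, mul_one]

theorem comaximalGraph_adj_iff_s16 {n : ℕ} [IsLocalRing (ZMod n)] {a b : ZMod n} :
    (comaximalGraph n).Adj a b ↔ a ≠ b ∧ (IsUnit a ∨ IsUnit b) :=
  and_congr_right fun _ => IsLocalRing.span_pair_eq_top_iff

theorem Nat.card_finset_len_forall_mem {V : Type*} [Finite V] (Q : V → Prop) (k : ℕ) :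
    Nat.card {S : Finset V // (∀ a ∈ S, Q a) ∧ S.card = k} = (Nat.card {v // Q v}).choose k := by
  classical
  have := Fintype.ofFinite V
  have hsubsets : Finset.univ.filter (fun S : Finset V => (∀ a ∈ S, Q a) ∧ S.card = k) =
      Finset.powersetCard k (Finset.univ.filter Q) := by
    ext S
    simp [Finset.subset_iff]
  rw [Nat.card_eq_fintype_card, Fintype.card_subtype, hsubsets, Finset.card_powersetCard,
    ← Fintype.card_subtype, Nat.card_eq_fintype_card]

namespace SimpleGraph

variable {V : Type*} {G : SimpleGraph V} {P : V → Prop}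

theorem pairwise_not_adj_iff_of_adj_iff (hG : ∀ a b, G.Adj a b ↔ a ≠ b ∧ (P a ∨ P b))
    (S : Finset V) : (∀ a ∈ S, ∀ b ∈ S, ¬ G.Adj a b) ↔ S.card ≤ 1 ∨ ∀ a ∈ S, ¬ P a := by
  simp only [hG, not_and, not_or]
  constructor
  · intro h
    refine or_iff_not_imp_left.2 fun hS a ha hPa => ?_
    obtain ⟨b, hb, hba⟩ := S.exists_mem_ne (by omega) a
    exact (h a ha b hb hba.symm).1 hPa
  · rintro (hS | hS) a ha b hb hab
    · exact absurd (Finset.card_le_one.1 hS a ha b hb) hab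
    · exact ⟨hS a ha, hS b hb⟩

theorem card_pairwise_not_adj_of_adj_iff [Finite V]
    (hG : ∀ a b, G.Adj a b ↔ a ≠ b ∧ (P a ∨ P b)) (k : ℕ) :
    Nat.card {S : Finset V // (∀ a ∈ S, ∀ b ∈ S, ¬ G.Adj a b) ∧ S.card = k} =
      (Nat.card {v // ¬ P v}).choose k + if k = 1 then Nat.card {v // P v} else 0 := by
  classical
  have := Fintype.ofFinite V
  simp only [pairwise_not_adj_iff_of_adj_iff hG]
  split_ifs with hk
  · subst hk
    have hsingletons : ∀ S : Finset V, ((S.card ≤ 1 ∨ ∀ a ∈ S, ¬ P a) ∧ S.card = 1) ↔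
        (∀ a ∈ S, True) ∧ S.card = 1 := fun S => by grind
    rw [Nat.card_congr (Equiv.subtypeEquivRight hsingletons), Nat.card_finset_len_forall_mem,
      Nat.choose_one_right, Nat.choose_one_right,
      Nat.card_congr (Equiv.subtypeUnivEquiv fun _ => trivial),
      ← Nat.card_congr (Equiv.sumCompl P), Nat.card_sum, add_comm]
  · have hsubsets : ∀ S : Finset V, ((S.card ≤ 1 ∨ ∀ a ∈ S, ¬ P a) ∧ S.card = k) ↔
        (∀ a ∈ S, ¬ P a) ∧ S.card = k := fun S => by
      refine and_congr_left fun hS => or_iff_right_of_imp fun h a ha => ?_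
      grind [Finset.card_eq_zero]
    rw [Nat.card_congr (Equiv.subtypeEquivRight hsubsets), Nat.card_finset_len_forall_mem,
      add_zero]

theorem indepPoly_of_adj_iff [Finite V] (hG : ∀ a b, G.Adj a b ↔ a ≠ b ∧ (P a ∨ P b)) :
    indepPoly G = C (Nat.card {v // P v} : ℝ) * X + (1 + X) ^ Nat.card {v // ¬ P v} := by
  ext j
  simp only [indepPoly, finsetSum_coeff, coeff_C_mul_X_pow, Finset.sum_ite_eq, Finset.mem_range,
    coeff_add, coeff_C_mul_X, coeff_one_add_X_pow]
  split_ifs with hj hj1 hj1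
  · rw [card_pairwise_not_adj_of_adj_iff hG, if_pos hj1]
    push_cast
    ring
  · rw [card_pairwise_not_adj_of_adj_iff hG, if_neg hj1]
    simp
  · have hP := Finite.card_subtype_le P
    have hnP := Finite.card_subtype_le (fun v => ¬ P v)
    rw [Nat.choose_eq_zero_of_lt (by omega), show Nat.card {v // P v} = 0 by omega]
    simp
  · rw [Nat.choose_eq_zero_of_lt ((Finite.card_subtype_le _).trans_lt (by omega))]
    simp

end SimpleGraph

/-- For `n = p^m` with `p` prime and `m ≥ 1`,
`I(Γ(ℤ_n), x) = φ(n)·x + (1 + x)^(p^(m−1))`. -/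
theorem stmt_16 (p m : ℕ) (hp : p.Prime) (hm : 1 ≤ m) :
    indepPoly (comaximalGraph (p ^ m)) =
      Polynomial.C ((Nat.totient (p ^ m) : ℝ)) * Polynomial.X +
        (1 + Polynomial.X) ^ (p ^ (m - 1)) := by
  have : NeZero (p ^ m) := ⟨pow_ne_zero m hp.ne_zero⟩
  have := ZMod.isLocalRing_prime_pow hp hm
  have hunits : Nat.card {a : ZMod (p ^ m) // IsUnit a} = Nat.totient (p ^ m) := by
    rw [Nat.card_isUnit, Nat.card_eq_fintype_card, ZMod.card_units_eq_totient]
  have hnonunits : Nat.card {a : ZMod (p ^ m) // ¬ IsUnit a} = p ^ (m - 1) := by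
    have hsplit : Nat.card {a : ZMod (p ^ m) // IsUnit a} +
        Nat.card {a : ZMod (p ^ m) // ¬ IsUnit a} = p ^ m := by
      rw [← Nat.card_sum, Nat.card_congr (Equiv.sumCompl _), Nat.card_zmod]
    have := Nat.prime_pow_sub_totient hp hm
    omega
  rw [SimpleGraph.indepPoly_of_adj_iff fun _ _ => comaximalGraph_adj_iff_s16, hunits, hnonunits]
end
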